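/- arXiv:2009.09752 — 2 statements merged into one kernel-verified Lean document; each statement's English description precedes it below -/
import Mathlib

section
/- Let f be in the Zygmund class Λ_*(ℝⁿ), i.e. f is bounded continuous with ‖f‖_{Λ̇_*} := sup_{x, 0<|h|<1} |f(x+h)-2f(x)+f(x-h)|/|h| < ∞. If |x−x'| < y/2 and 1/2 < y/y' < 2, then |Δ₂f(x,y) − Δ₂f(x',y')| ≤ C‖f‖_{Λ_*} ( |x−x'| log(e + y/|x−x'|) + |y−y'| log(e + y/|y−y'|) ), where Δ₂f(x,y) = sup_{|h|=y}|f(x+h)−2f(x)+f(x−h)| and C depends only on n. -/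
set_option linter.unusedSectionVars false
set_option linter.unusedVariables false
set_option maxHeartbeats 1000000

/-- The maximal second difference `Δ₂f(x,y) = sup_{‖h‖=y} |f(x+h) - 2f(x) + f(x-h)|`. -/
noncomputable def delta2 {n : ℕ} (f : EuclideanSpace ℝ (Fin n) → ℝ)
    (x : EuclideanSpace ℝ (Fin n)) (y : ℝ) : ℝ :=
  sSup {v : ℝ | ∃ h : EuclideanSpace ℝ (Fin n), ‖h‖ = y ∧ v = |f (x + h) - 2 * f x + f (x - h)|}

section Aux


variable {E : Type*} [NormedAddCommGroup E] [NormedSpace ℝ E]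

/-- second difference -/
def sd (f : E → ℝ) (x h : E) : ℝ := f (x + h) - 2 * f x + f (x - h)

lemma sd_bound (f : E → ℝ) (M : ℝ) (hbd : ∀ z, |f z| ≤ M) (x h : E) :
    |sd f x h| ≤ 4 * M := by
  have h1 := abs_le.mp (hbd (x + h))
  have h2 := abs_le.mp (hbd x)
  have h3 := abs_le.mp (hbd (x - h))
  rw [abs_le]; unfold sd; constructor <;> nlinarith [h1.1, h1.2, h2.1, h2.2, h3.1, h3.2]

lemma zyg4 (f : E → ℝ) (M : ℝ) (hbd : ∀ z, |f z| ≤ M)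
    (hz : ∀ x h : E, 0 < ‖h‖ → ‖h‖ < 1 → |f (x + h) - 2 * f x + f (x - h)| ≤ M * ‖h‖) :
    ∀ x h : E, |sd f x h| ≤ 4 * M * ‖h‖ := by
  intro x h
  have hM : 0 ≤ M := (abs_nonneg _).trans (hbd x)
  rcases eq_or_lt_of_le (norm_nonneg h) with h0 | hpos
  · have hh : h = 0 := norm_eq_zero.mp h0.symm
    subst hh
    have : sd f x 0 = 0 := by unfold sd; simp; ring
    rw [this]; simp [← h0]
  · rcases lt_or_ge ‖h‖ 1 with hlt | hge
    · refine (hz x h hpos hlt).trans ?_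
      nlinarith [norm_nonneg h]
    · refine (sd_bound f M hbd x h).trans ?_
      nlinarith




lemma lemA (f : E → ℝ) (M : ℝ) (hM : 0 ≤ M)
    (hz : ∀ x h : E, |sd f x h| ≤ 4 * M * ‖h‖) :
    ∀ (N : ℕ) (x u h : E),
      |sd f (x + u) h - sd f x h| ≤ (1/2 : ℝ)^N * (8 * M * ‖h‖) + 8 * M * ‖u‖ * N := by
  intro N
  induction N with
  | zero =>
    intro x u h
    have b1 := hz (x + u) h
    have b2 := hz x h
    refine le_trans (abs_sub _ _) ?_
    push_cast
    norm_num
    linarith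
  | succ N ih =>
    intro x u h
    have hid : sd f (x + u) h - sd f x h
        = (1/2) * (sd f (x + u + u) h - sd f x h)
          - (1/2) * (sd f (x + u + h) u - 2 * sd f (x + u) u + sd f (x + u - h) u) := by
      unfold sd
      rw [show x + u + h + u = x + u + u + h by abel,
          show x + u + h - u = x + h by abel,
          show x + u - u = x by abel,
          show x + u - h + u = x + u + u - h by abel,
          show x + u - h - u = x - h by abel]
      ring
    have h1 := ih x (u + u) h
    rw [show x + (u + u) = x + u + u from (add_assoc x u u).symm] at h1
    have hnu : ‖u + u‖ ≤ ‖u‖ + ‖u‖ := norm_add_le u u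
    have b1 := abs_le.mp (hz (x + u + h) u)
    have b2 := abs_le.mp (hz (x + u) u)
    have b3 := abs_le.mp (hz (x + u - h) u)
    have hbr : |sd f (x + u + h) u - 2 * sd f (x + u) u + sd f (x + u - h) u| ≤ 16 * M * ‖u‖ := by
      rw [abs_le]; constructor <;> nlinarith [b1.1, b1.2, b2.1, b2.2, b3.1, b3.2]
    rw [hid]
    have h1' := abs_le.mp h1
    have hpow : (0:ℝ) ≤ (1/2:ℝ)^N := by positivity
    have hMu : 0 ≤ M * ‖u‖ := mul_nonneg hM (norm_nonneg u)
    rw [abs_le]; push_cast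
    constructor <;> · rw [pow_succ]; nlinarith [mul_nonneg hM (Nat.cast_nonneg (α := ℝ) N), mul_nonneg (mul_nonneg hM (Nat.cast_nonneg (α := ℝ) N)) (norm_nonneg u)]

lemma lemB (f : E → ℝ) (M : ℝ) (hM : 0 ≤ M) (hbd : ∀ z, |f z| ≤ M)
    (hz : ∀ x h : E, |sd f x h| ≤ 4 * M * ‖h‖) (w : E) :
    ∀ (N N₀ : ℕ) (z v : E),
      |(f (z + v + w) - f (z + v)) - (f (z + w) - f z)| ≤
        (1/2:ℝ)^N * (4*M) + (1/2:ℝ)^N₀ * (8*M*‖v‖) + 8*M*‖w‖*(N₀+1) := by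
  intro N
  induction N with
  | zero =>
    intro N₀ z v
    have c1 := abs_le.mp (hbd (z + v + w))
    have c2 := abs_le.mp (hbd (z + v))
    have c3 := abs_le.mp (hbd (z + w))
    have c4 := abs_le.mp (hbd z)
    have hp : (0:ℝ) ≤ (1/2:ℝ)^N₀ * (8*M*‖v‖) := by positivity
    have hw : (0:ℝ) ≤ 8*M*‖w‖*(N₀+1) := by positivity
    rw [abs_le]
    constructor <;> · simp only [pow_zero, one_mul] ; nlinarith [c1.1, c1.2, c2.1, c2.2, c3.1, c3.2, c4.1, c4.2]
  | succ N ih =>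
    intro N₀ z v
    have hid : (f (z + v + w) - f (z + v)) - (f (z + w) - f z)
        = (1/2) * ((f (z + v + v + w) - f (z + v + v)) - (f (z + w) - f z))
          - (1/2) * (sd f (z + v + w) v - sd f (z + v) v) := by
      unfold sd
      rw [show z + v + w + v = z + v + v + w by abel,
          show z + v + w - v = z + w by abel,
          show z + v - v = z by abel]
      ring
    have h1 := ih (N₀ + 1) z (v + v)
    rw [show z + (v + v) = z + v + v from (add_assoc z v v).symm] at h1
    have h2 := lemA f M hM hz N₀ (z + v) w v
    have hnv : ‖v + v‖ ≤ ‖v‖ + ‖v‖ := norm_add_le v v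
    have h1' := abs_le.mp h1
    have h2' := abs_le.mp h2
    rw [hid, abs_le]
    have hp : (0:ℝ) ≤ (1/2:ℝ)^N₀ := by positivity
    have hq : (0:ℝ) ≤ (1/2:ℝ)^N := by positivity
    have hMw : (0:ℝ) ≤ M * ‖w‖ := mul_nonneg hM (norm_nonneg w)
    have hMv : (0:ℝ) ≤ M * ‖v‖ := mul_nonneg hM (norm_nonneg v)
    have hkey : (1/2:ℝ)^N₀ * (1/2) * (8*M*‖v + v‖) ≤ (1/2:ℝ)^N₀ * (8*M*‖v‖) := by
      have h8 : 8*M*‖v + v‖ ≤ 8*M*(‖v‖ + ‖v‖) := by nlinarith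
      have := mul_le_mul_of_nonneg_left h8 (by positivity : (0:ℝ) ≤ (1/2:ℝ)^N₀ * (1/2))
      nlinarith
    constructor <;> · push_cast [pow_succ] at * ; linarith [h1'.1, h1'.2, h2'.1, h2'.2]


lemma exists_dyadic (T d : ℝ) (hd : 0 < d) (hT : d ≤ T) :
    ∃ N : ℕ, (1/2:ℝ)^N * T ≤ d ∧ (N:ℝ) ≤ 1 + Real.log (T/d) / Real.log 2 := by
  refine ⟨⌈Real.logb 2 (T/d)⌉₊, ?_, ?_⟩
  · have hTd : 1 ≤ T/d := (one_le_div hd).mpr hT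
    have h1 : T/d ≤ 2^(⌈Real.logb 2 (T/d)⌉₊ : ℕ) := by
      calc T/d = (2:ℝ) ^ Real.logb 2 (T/d) :=
            (Real.rpow_logb two_pos (by norm_num) (by positivity)).symm
        _ ≤ (2:ℝ) ^ ((⌈Real.logb 2 (T/d)⌉₊ : ℝ)) :=
            Real.rpow_le_rpow_of_exponent_le one_le_two (Nat.le_ceil _)
        _ = _ := by rw [Real.rpow_natCast]
    have h2 : (0:ℝ) < 2^(⌈Real.logb 2 (T/d)⌉₊ : ℕ) := by positivity
    rw [div_le_iff₀ hd] at h1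
    have : (1/2:ℝ)^(⌈Real.logb 2 (T/d)⌉₊ : ℕ) = ((2:ℝ)^(⌈Real.logb 2 (T/d)⌉₊ : ℕ))⁻¹ := by
      rw [one_div, inv_pow]
    rw [this, inv_mul_le_iff₀ h2]
    nlinarith
  · have h0 : 0 ≤ Real.logb 2 (T/d) :=
      Real.logb_nonneg one_lt_two ((one_le_div hd).mpr hT)
    have hc := Nat.ceil_lt_add_one h0
    simp only [Real.logb] at hc ⊢
    linarith

lemma log_one_le (t : ℝ) (ht : 0 ≤ t) : 1 ≤ Real.log (Real.exp 1 + t) := by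
  calc (1:ℝ) = Real.log (Real.exp 1) := (Real.log_exp 1).symm
    _ ≤ Real.log (Real.exp 1 + t) :=
        Real.log_le_log (Real.exp_pos 1) (by linarith)

lemma log_ratio_le (t : ℝ) (ht : 0 < t) : Real.log t ≤ Real.log (Real.exp 1 + t) :=
  Real.log_le_log ht (by linarith [Real.exp_pos 1])

lemma estA (f : E → ℝ) (M : ℝ) (hM : 0 ≤ M)
    (hz : ∀ x h : E, |sd f x h| ≤ 4 * M * ‖h‖)
    (x x' : E) (y : ℝ) (hy : 0 < y) (hxx : ‖x - x'‖ < y / 2) (h : E) (hh : ‖h‖ = y) :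
    |sd f x h - sd f x' h| ≤ 28 * M * ‖x - x'‖ * Real.log (Real.exp 1 + y / ‖x - x'‖) := by
  by_cases hx : x = x'
  · subst hx; simp
  · have hnx : 0 < ‖x - x'‖ := norm_pos_iff.mpr (sub_ne_zero.mpr hx)
    set nx := ‖x - x'‖ with hnxdef
    obtain ⟨N, hN1, hN2⟩ := exists_dyadic y nx hnx (by linarith)
    have hmain := lemA f M hM hz N x' (x - x') h
    rw [show x' + (x - x') = x by abel] at hmain
    rw [hh] at hmain
    set L := Real.log (Real.exp 1 + y / nx) with hLdef
    have hL1 : 1 ≤ L := log_one_le _ (by positivity)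
    have hLr : Real.log (y / nx) ≤ L := log_ratio_le _ (by positivity)
    have hlr0 : 0 ≤ Real.log (y / nx) :=
      Real.log_nonneg ((one_le_div hnx).mpr (by linarith))
    have hlog2 : (2/3 : ℝ) ≤ Real.log 2 := by
      have := Real.log_two_gt_d9; linarith
    have hdiv : Real.log (y / nx) / Real.log 2 ≤ (3/2) * Real.log (y / nx) := by
      rw [div_le_iff₀ (by linarith : (0:ℝ) < Real.log 2)]
      nlinarith
    have hNL : (N : ℝ) ≤ (5/2) * L := by linarith
    have ht1 : (1/2:ℝ)^N * (8 * M * y) ≤ 8 * M * nx := by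
      have := mul_le_mul_of_nonneg_left hN1 (by linarith : (0:ℝ) ≤ 8 * M)
      nlinarith
    have ht2 : 8 * M * nx * (N:ℝ) ≤ 8 * M * nx * ((5/2) * L) :=
      mul_le_mul_of_nonneg_left hNL (by positivity)
    have ht3 : 8 * M * nx ≤ 8 * M * nx * L :=
      le_mul_of_one_le_right (by positivity) hL1
    calc |sd f x h - sd f x' h| ≤ (1/2:ℝ)^N * (8 * M * y) + 8 * M * ‖x - x'‖ * N := hmain
      _ ≤ 28 * M * nx * L := by nlinarith
      _ = 28 * M * nx * L := rfl

lemma estB (f : E → ℝ) (M : ℝ) (hM : 0 ≤ M) (hbd : ∀ z, |f z| ≤ M)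
    (hz : ∀ x h : E, |sd f x h| ≤ 4 * M * ‖h‖)
    (x' : E) (y y' : ℝ) (hy : 0 < y) (hy' : 0 < y')
    (hr1 : 1/2 < y / y') (hr2 : y / y' < 2) (h : E) (hh : ‖h‖ = y) :
    |sd f x' h - sd f x' ((y'/y) • h)| ≤
      61 * M * |y - y'| * Real.log (Real.exp 1 + y / |y - y'|) := by
  by_cases hyy : y = y'
  · rw [← hyy, div_self (ne_of_gt hy), one_smul]
    simp
  · have hny : 0 < |y - y'| := abs_pos.mpr (sub_ne_zero.mpr hyy)
    set ny := |y - y'| with hnydef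
    rw [lt_div_iff₀ hy'] at hr1
    rw [div_lt_iff₀ hy'] at hr2
    have hnylt : ny < y := by
      rw [hnydef, abs_lt]; constructor <;> linarith
    set k := (y'/y) • h with hkdef
    have hk : ‖k‖ = y' := by
      rw [hkdef, norm_smul, Real.norm_eq_abs, abs_of_pos (div_pos hy' hy), hh,
        div_mul_cancel₀ _ (ne_of_gt hy)]
    have hw : ‖h - k‖ = ny := by
      have hsub : h - (y'/y) • h = ((y - y')/y) • h := by
        rw [sub_div, div_self (ne_of_gt hy), sub_smul, one_smul]
      rw [hkdef, hsub, norm_smul, Real.norm_eq_abs, abs_div, abs_of_pos hy, hh,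
        div_mul_cancel₀ _ (ne_of_gt hy)]
    have hv : ‖h + k‖ ≤ 3 * y := by
      have := norm_add_le h k
      rw [hh, hk] at this; linarith
    obtain ⟨N₀, hN01, hN02⟩ := exists_dyadic (3*y) ny hny (by linarith)
    obtain ⟨N, hN⟩ := exists_pow_lt_of_lt_one (show (0:ℝ) < ny/4 by positivity)
      (by norm_num : (1/2:ℝ) < 1)
    have hmain := lemB f M hM hbd hz (h - k) N N₀ (x' - h) (h + k)
    rw [show x' - h + (h + k) + (h - k) = x' + h by abel,
        show x' - h + (h + k) = x' + k by abel,
        show x' - h + (h - k) = x' - k by abel,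
        hw] at hmain
    have hgoal_eq : sd f x' h - sd f x' k
        = (f (x' + h) - f (x' + k)) - (f (x' - k) - f (x' - h)) := by
      unfold sd; ring
    rw [hgoal_eq]
    set L := Real.log (Real.exp 1 + y / ny) with hLdef
    have hL1 : 1 ≤ L := log_one_le _ (by positivity)
    have hLr : Real.log (y / ny) ≤ L := log_ratio_le _ (by positivity)
    have hlr0 : 0 ≤ Real.log (y / ny) :=
      Real.log_nonneg ((one_le_div hny).mpr (le_of_lt hnylt))
    have hlog2 : (2/3 : ℝ) ≤ Real.log 2 := by
      have := Real.log_two_gt_d9; linarith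
    have hlog3 : Real.log (3 * y / ny) ≤ 2 + Real.log (y / ny) := by
      rw [mul_div_assoc, Real.log_mul (by norm_num) (ne_of_gt (div_pos hy hny))]
      have h3 : Real.log 3 ≤ 2 := by
        have := Real.log_le_sub_one_of_pos (show (0:ℝ) < 3 by norm_num)
        linarith
      linarith
    have hdiv : Real.log (3 * y / ny) / Real.log 2 ≤ (3/2) * (2 + Real.log (y / ny)) := by
      rw [div_le_iff₀ (by linarith : (0:ℝ) < Real.log 2)]
      have hpos : 0 ≤ Real.log (3 * y / ny) := by
        apply Real.log_nonneg
        rw [le_div_iff₀ hny]; linarith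
      nlinarith
    have hN0L : (N₀ : ℝ) + 1 ≤ (13/2) * L := by linarith
    have ht1 : (1/2:ℝ)^N * (4 * M) ≤ M * ny := by nlinarith [hN.le]
    have ht2 : (1/2:ℝ)^N₀ * (8 * M * ‖h + k‖) ≤ 8 * M * ny := by
      have hp : (0:ℝ) ≤ (1/2:ℝ)^N₀ := by positivity
      have h1 : (1/2:ℝ)^N₀ * (8 * M * ‖h + k‖) ≤ (1/2:ℝ)^N₀ * (8 * M * (3*y)) := by
        apply mul_le_mul_of_nonneg_left _ hp
        nlinarith [norm_nonneg (h + k)]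
      have h2 : (1/2:ℝ)^N₀ * (8 * M * (3*y)) = 8 * M * ((1/2:ℝ)^N₀ * (3*y)) := by ring
      have h3 : 8 * M * ((1/2:ℝ)^N₀ * (3*y)) ≤ 8 * M * ny :=
        mul_le_mul_of_nonneg_left hN01 (by linarith)
      linarith
    have ht3 : 8 * M * ny * ((N₀:ℝ) + 1) ≤ 8 * M * ny * ((13/2) * L) :=
      mul_le_mul_of_nonneg_left hN0L (by positivity)
    have hMny : 0 ≤ M * ny := by positivity
    calc |(f (x' + h) - f (x' + k)) - (f (x' - k) - f (x' - h))|
        ≤ (1/2:ℝ)^N * (4*M) + (1/2:ℝ)^N₀ * (8*M*‖h + k‖) + 8*M*ny*((N₀:ℝ)+1) := hmain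
      _ ≤ 61 * M * ny * L := by nlinarith

end Aux

/-- For `f` in the Zygmund class `Λ_*(ℝⁿ)` (continuous, bounded, with second
differences `≤ Mf |h|`), if `|x − x'| < y/2` and `1/2 < y/y' < 2` then
`|Δ₂f(x,y) − Δ₂f(x',y')| ≤ C Mf (|x−x'| log(e + y/|x−x'|) + |y−y'| log(e + y/|y−y'|))`,
where `C` depends only on `n`. -/
theorem delta2_zygmund_variation (n : ℕ) :
    ∃ C > 0, ∀ (f : EuclideanSpace ℝ (Fin n) → ℝ) (Mf : ℝ),
      Continuous f →
      (∀ x, |f x| ≤ Mf) →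
      (∀ x h, 0 < ‖h‖ → ‖h‖ < 1 → |f (x + h) - 2 * f x + f (x - h)| ≤ Mf * ‖h‖) →
      ∀ (x x' : EuclideanSpace ℝ (Fin n)) (y y' : ℝ), 0 < y → 0 < y' →
        ‖x - x'‖ < y / 2 → 1 / 2 < y / y' → y / y' < 2 →
        |delta2 f x y - delta2 f x' y'| ≤
          C * Mf * (‖x - x'‖ * Real.log (Real.exp 1 + y / ‖x - x'‖)
            + |y - y'| * Real.log (Real.exp 1 + y / |y - y'|)) := by
  refine ⟨64, by norm_num, ?_⟩
  intro f Mf hcont hbd hzyg x x' y y' hy hy' hxx hr1 hr2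
  have hM : 0 ≤ Mf := (abs_nonneg _).trans (hbd 0)
  have hz := zyg4 f Mf hbd hzyg
  set nx := ‖x - x'‖ with hnx
  set ny := |y - y'| with hny
  set LX := Real.log (Real.exp 1 + y / nx) with hLX
  set LY := Real.log (Real.exp 1 + y / ny) with hLY
  have hLX1 : 1 ≤ LX := log_one_le _ (div_nonneg hy.le (norm_nonneg _))
  have hLY1 : 1 ≤ LY := log_one_le _ (div_nonneg hy.le (abs_nonneg _))
  have hterm1 : 0 ≤ Mf * (nx * LX) := by positivity
  have hterm2 : 0 ≤ Mf * (ny * LY) := by positivity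
  rcases Nat.eq_zero_or_pos n with hn | hn
  · subst hn
    have hz0 : ∀ (z : EuclideanSpace ℝ (Fin 0)) (t : ℝ), 0 < t → delta2 f z t = 0 := by
      intro z t ht
      have hempty : {v : ℝ | ∃ h : EuclideanSpace ℝ (Fin 0), ‖h‖ = t ∧
          v = |f (z + h) - 2 * f z + f (z - h)|} = ∅ := by
        ext v
        simp only [Set.mem_setOf_eq, Set.mem_empty_iff_false, iff_false, not_exists]
        rintro h ⟨hnorm, -⟩
        have h0 : h = 0 := Subsingleton.elim h 0
        rw [h0, norm_zero] at hnorm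
        exact absurd hnorm.symm (ne_of_gt ht)
      rw [delta2, hempty, Real.sSup_empty]
    rw [hz0 x y hy, hz0 x' y' hy']
    simp only [sub_zero, abs_zero]
    nlinarith
  · -- main case
    have hy2y : y' < 2 * y := by
      rw [lt_div_iff₀ hy'] at hr1; linarith
    -- basic sphere element
    set e₁ : EuclideanSpace ℝ (Fin n) := EuclideanSpace.single (⟨0, hn⟩ : Fin n) (1:ℝ) with he₁
    have he₁n : ‖e₁‖ = 1 := by rw [he₁, EuclideanSpace.norm_single]; norm_num
    have hsphere : ∀ t : ℝ, 0 < t → ∃ h : EuclideanSpace ℝ (Fin n), ‖h‖ = t := by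
      intro t ht
      exact ⟨t • e₁, by rw [norm_smul, he₁n, Real.norm_eq_abs, abs_of_pos ht, mul_one]⟩
    set S1 := {v : ℝ | ∃ h : EuclideanSpace ℝ (Fin n), ‖h‖ = y ∧
        v = |f (x + h) - 2 * f x + f (x - h)|} with hS1
    set S2 := {v : ℝ | ∃ h : EuclideanSpace ℝ (Fin n), ‖h‖ = y' ∧
        v = |f (x' + h) - 2 * f x' + f (x' - h)|} with hS2
    have hS1ne : S1.Nonempty := by
      obtain ⟨h, hh⟩ := hsphere y hy
      exact ⟨_, h, hh, rfl⟩
    have hS2ne : S2.Nonempty := by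
      obtain ⟨h, hh⟩ := hsphere y' hy'
      exact ⟨_, h, hh, rfl⟩
    have hS1bdd : BddAbove S1 := by
      refine ⟨4 * Mf, ?_⟩
      rintro v ⟨h, hh, rfl⟩
      exact sd_bound f Mf hbd x h
    have hS2bdd : BddAbove S2 := by
      refine ⟨4 * Mf, ?_⟩
      rintro v ⟨h, hh, rfl⟩
      exact sd_bound f Mf hbd x' h
    set EE := 28 * Mf * nx * LX + 61 * Mf * ny * LY with hEE
    have est : ∀ h : EuclideanSpace ℝ (Fin n), ‖h‖ = y →
        |sd f x h - sd f x' ((y'/y) • h)| ≤ EE := by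
      intro h hh
      have e1 := estA f Mf hM hz x x' y hy hxx h hh
      have e2 := estB f Mf hM hbd hz x' y y' hy hy' hr1 hr2 h hh
      calc |sd f x h - sd f x' ((y'/y) • h)|
          ≤ |sd f x h - sd f x' h| + |sd f x' h - sd f x' ((y'/y) • h)| := abs_sub_le _ _ _
        _ ≤ EE := by rw [hEE]; linarith
    have hknorm : ∀ h : EuclideanSpace ℝ (Fin n), ‖h‖ = y → ‖(y'/y) • h‖ = y' := by
      intro h hh
      rw [norm_smul, Real.norm_eq_abs, abs_of_pos (div_pos hy' hy), hh,
        div_mul_cancel₀ _ (ne_of_gt hy)]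
    have hle1 : sSup S1 ≤ sSup S2 + EE := by
      apply csSup_le hS1ne
      rintro v ⟨h, hh, rfl⟩
      have hmem : |f (x' + (y'/y) • h) - 2 * f x' + f (x' - (y'/y) • h)| ∈ S2 :=
        ⟨(y'/y) • h, hknorm h hh, rfl⟩
      have h1 := le_csSup hS2bdd hmem
      have h2 := est h hh
      have h3 := abs_sub_abs_le_abs_sub (sd f x h) (sd f x' ((y'/y) • h))
      show |sd f x h| ≤ _
      have : |sd f x' ((y'/y) • h)| ≤ sSup S2 := h1
      linarith
    have hle2 : sSup S2 ≤ sSup S1 + EE := by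
      apply csSup_le hS2ne
      rintro v ⟨h', hh', rfl⟩
      have hhn : ‖(y/y') • h'‖ = y := by
        rw [norm_smul, Real.norm_eq_abs, abs_of_pos (div_pos hy hy'), hh',
          div_mul_cancel₀ _ (ne_of_gt hy')]
      have hkh' : (y'/y) • ((y/y') • h') = h' := by
        rw [smul_smul, div_mul_div_cancel₀]
        · rw [div_self (ne_of_gt hy'), one_smul]
        · exact ne_of_gt hy
      have hmem : |f (x + (y/y') • h') - 2 * f x + f (x - (y/y') • h')| ∈ S1 :=
        ⟨(y/y') • h', hhn, rfl⟩
      have h1 := le_csSup hS1bdd hmem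
      have h2 := est ((y/y') • h') hhn
      rw [hkh'] at h2
      have h3 := abs_sub_abs_le_abs_sub (sd f x' h') (sd f x ((y/y') • h'))
      show |sd f x' h'| ≤ _
      have habs : |sd f x' h' - sd f x ((y/y') • h')| = |sd f x ((y/y') • h') - sd f x' h'| :=
        abs_sub_comm _ _
      have : |sd f x ((y/y') • h')| ≤ sSup S1 := h1
      rw [habs] at h3
      linarith
    have hfinal : |sSup S1 - sSup S2| ≤ EE :=
      abs_sub_le_iff.mpr ⟨by linarith, by linarith⟩
    have hdelta : delta2 f x y = sSup S1 := rfl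
    have hdelta' : delta2 f x' y' = sSup S2 := rfl
    rw [hdelta, hdelta']
    refine hfinal.trans ?_
    rw [hEE]
    nlinarith
end

section
/- Let f ∈ Λ_*(ℝⁿ) (Zygmund class) and let {f_j}_{j≥0} be a Littlewood–Paley decomposition of f with ‖f_j‖_∞ ≤ A 2^{−j}, ‖∇f_j‖_∞ ≤ A, and ‖∂^α f_j‖_∞ ≤ A 2^{j(|α|−1)} for |α| ≤ 3. Then for any x, x' ∈ ℝⁿ, y > 0 and p with |p| = y: |f(x+p)−2f(x)+f(x−p) − f(x'+p)+2f(x')−f(x'−p)| ≤ C A |x−x'| log(e + y/|x−x'|). -/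
open Real Set Finset

/-! Write `Δ g x = g (x + p) - 2 g x + g (x - p)`. The left-hand side is `∑ⱼ bⱼ` with
`bⱼ = Δ fⱼ x - Δ fⱼ x'`, and every `bⱼ` obeys three bounds: `8 A 2⁻ʲ` from the size of `fⱼ`,
`4 A |x - x'|` from its gradient, and `2 A 2ʲ |p|²` from its Hessian. With `d = |x - x'|`, use the
Hessian bound for `2ʲ ≤ d / |p|²` and the size bound for `2ʲ ≥ 1 / d`: both geometric pieces are
`O(A d)`. The `O(log (|p| / d))` scales in between contribute `A d` each. -/

section SecondDifference

variable {E F : Type*}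

def secondDiff [AddGroup E] [AddGroup F] (f : E → F) (x p : E) : F :=
  f (x + p) - f x - (f x - f (x - p))

theorem HasSum.secondDiff [AddGroup E] [AddCommGroup F] [TopologicalSpace F]
    [IsTopologicalAddGroup F] {ι : Type*} {f : ι → E → F} {g : E → F}
    (h : ∀ z, HasSum (fun i => f i z) (g z)) (x p : E) :
    HasSum (fun i => _root_.secondDiff (f i) x p) (_root_.secondDiff g x p) :=
  ((h _).sub (h _)).sub ((h _).sub (h _))

theorem norm_secondDiff_le [AddGroup E] [SeminormedAddCommGroup F] {f : E → F} {B : ℝ}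
    (hf : ∀ z, ‖f z‖ ≤ B) (x p : E) :
    ‖secondDiff f x p‖ ≤ 4 * B := by
  calc ‖secondDiff f x p‖ ≤ ‖f (x + p)‖ + ‖f x‖ + (‖f x‖ + ‖f (x - p)‖) :=
        norm_sub_le_of_le (norm_sub_le _ _) (norm_sub_le _ _)
    _ ≤ 4 * B := by linarith [hf (x + p), hf x, hf (x - p)]

theorem norm_secondDiff_sub_secondDiff_le [SeminormedAddCommGroup E] [SeminormedAddCommGroup F]
    {f : E → F} {C : ℝ} (hf : ∀ a b, ‖f a - f b‖ ≤ C * ‖a - b‖) (x x' p : E) :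
    ‖secondDiff f x p - secondDiff f x' p‖ ≤ 4 * C * ‖x - x'‖ := by
  have hplus : ‖f (x + p) - f (x' + p)‖ ≤ C * ‖x - x'‖ := by simpa using hf (x + p) (x' + p)
  have hzero := hf x x'
  have hminus : ‖f (x - p) - f (x' - p)‖ ≤ C * ‖x - x'‖ := by simpa using hf (x - p) (x' - p)
  calc ‖secondDiff f x p - secondDiff f x' p‖
        = ‖(f (x + p) - f (x' + p)) - (f x - f x')
            - ((f x - f x') - (f (x - p) - f (x' - p)))‖ := by
          simp only [secondDiff]; abel_nf
    _ ≤ C * ‖x - x'‖ + C * ‖x - x'‖ + (C * ‖x - x'‖ + C * ‖x - x'‖) :=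
        norm_sub_le_of_le (norm_sub_le_of_le hplus hzero) (norm_sub_le_of_le hzero hminus)
    _ = 4 * C * ‖x - x'‖ := by ring

variable [NormedAddCommGroup E] [NormedSpace ℝ E] [NormedAddCommGroup F] [NormedSpace ℝ F]

theorem norm_sub_le_of_norm_fderiv_le {f : E → F} (hf : Differentiable ℝ f) {C : ℝ}
    (hC : ∀ z, ‖fderiv ℝ f z‖ ≤ C) (a b : E) : ‖f a - f b‖ ≤ C * ‖a - b‖ :=
  convex_univ.norm_image_sub_le_of_norm_fderiv_le (fun z _ => hf z) (fun z _ => hC z)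
    (mem_univ b) (mem_univ a)

theorem norm_secondDiff_le_of_norm_iteratedFDeriv_two_le {f : E → F} (hf : ContDiff ℝ 2 f)
    {M : ℝ} (hM : ∀ z, ‖iteratedFDeriv ℝ 2 f z‖ ≤ M) (x p : E) :
    ‖secondDiff f x p‖ ≤ M * ‖p‖ ^ 2 := by
  have hf₁ : Differentiable ℝ f := hf.differentiable two_ne_zero
  have hf₂ : Differentiable ℝ (fderiv ℝ f) :=
    (hf.fderiv_right (m := 1) (by norm_num)).differentiable one_ne_zero
  have hfderiv_lip := norm_sub_le_of_norm_fderiv_le hf₂ fun z => by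
    rw [← norm_iteratedFDeriv_one, norm_iteratedFDeriv_fderiv]; exact hM z
  -- `secondDiff f x p` is the increment over `[x - p, x]` of `z ↦ f (z + p) - f z`
  have hshift : Differentiable ℝ fun z => f (z + p) := by fun_prop
  have hΔ : Differentiable ℝ fun z => f (z + p) - f z := hshift.sub hf₁
  have hΔ_deriv : ∀ z, ‖fderiv ℝ (fun z => f (z + p) - f z) z‖ ≤ M * ‖p‖ := fun z => by
    rw [fderiv_fun_sub (hshift z) (hf₁ z), fderiv_comp_add_right]
    simpa using hfderiv_lip (z + p) z
  calc ‖secondDiff f x p‖ = ‖(f (x + p) - f x) - (f (x - p + p) - f (x - p))‖ := by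
        simp [secondDiff]
    _ ≤ M * ‖p‖ * ‖x - (x - p)‖ := norm_sub_le_of_norm_fderiv_le hΔ hΔ_deriv x (x - p)
    _ = M * ‖p‖ ^ 2 := by rw [sub_sub_cancel]; ring

end SecondDifference

section DyadicSum

variable {a d y : ℝ}

theorem one_le_log_exp_one_add {r : ℝ} (hr : 0 ≤ r) : 1 ≤ log (exp 1 + r) := by
  calc 1 = log (exp 1) := (log_exp 1).symm
    _ ≤ log (exp 1 + r) := log_le_log (exp_pos 1) (by linarith)

theorem exists_dyadic_cutoffs (hd : 0 < d) (hy : 0 < y) :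
    ∃ L K : ℕ, y ^ 2 * (2 ^ L - 1) ≤ d ∧ 1 / 2 ^ K ≤ d ∧
      ((K - L : ℕ) : ℝ) ≤ 5 * log (exp 1 + y / d) := by
  set L := ⌊logb 2 (d / y ^ 2)⌋₊
  set K := ⌈logb 2 (1 / d)⌉₊
  refine ⟨L, K, ?_, ?_, ?_⟩
  · rcases Nat.eq_zero_or_pos L with hL | hL
    · simpa [hL] using hd.le
    have hLlog : (L : ℝ) ≤ logb 2 (d / y ^ 2) := Nat.floor_le (by linarith [Nat.floor_pos.mp hL])
    have h2L : (2 : ℝ) ^ L ≤ d / y ^ 2 := by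
      rw [← rpow_natCast]; exact (le_logb_iff_rpow_le one_lt_two (by positivity)).mp hLlog
    have := (le_div_iff₀' (by positivity)).mp h2L
    nlinarith
  · have h2K : 1 / d ≤ (2 : ℝ) ^ K := by
      rw [← rpow_natCast]; exact (logb_le_iff_le_rpow one_lt_two (by positivity)).mp (Nat.le_ceil _)
    rw [div_le_iff₀ (by positivity)]
    rw [div_le_iff₀ hd] at h2K
    linarith
  · have hℓ := one_le_log_exp_one_add (div_pos hy hd).le
    rcases le_or_gt K L with hKL | hLK
    · rw [Nat.sub_eq_zero_of_le hKL, Nat.cast_zero]; linarith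
    rw [Nat.cast_sub hLK.le]
    have hK : (K : ℝ) < logb 2 (1 / d) + 1 :=
      Nat.ceil_lt_add_one (Nat.ceil_pos.mp (Nat.zero_lt_of_lt hLK)).le
    have hL : logb 2 (d / y ^ 2) < L + 1 := Nat.lt_floor_add_one _
    -- the cutoffs are `log₂ (1/d)` and `log₂ (d/y²)`, which differ by `2 log₂ (y/d)`
    have hgap : logb 2 (1 / d) - logb 2 (d / y ^ 2) = 2 * logb 2 (y / d) := by
      rw [← logb_div (by positivity) (by positivity), show 1 / d / (d / y ^ 2) = (y / d) ^ 2 by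
        field_simp, logb_pow]; push_cast; ring
    have hlogb : logb 2 (y / d) ≤ 3 / 2 * log (exp 1 + y / d) := by
      have hlog2 : 2 / 3 < log 2 := by linarith [log_two_gt_d9]
      calc logb 2 (y / d) ≤ logb 2 (exp 1 + y / d) :=
            logb_le_logb_of_le one_lt_two (by positivity) (by linarith [exp_pos 1])
        _ = log (exp 1 + y / d) / log 2 := rfl
        _ ≤ 3 / 2 * log (exp 1 + y / d) := by
          rw [div_le_iff₀ (by linarith)]; nlinarith
    linarith

theorem tsum_le_of_dyadic_regimes {g : ℕ → ℝ} (hg : ∀ j, 0 ≤ g j)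
    (hgrowth : ∀ j, g j ≤ a * 2 ^ j * y ^ 2) (hflat : ∀ j, g j ≤ a * d)
    (hdecay : ∀ j, g j ≤ a / 2 ^ j) (L K : ℕ) :
    ∑' j, g j ≤ a * y ^ 2 * (2 ^ L - 1) + (K - L : ℕ) * (a * d) + 2 * a / 2 ^ K := by
  have hgeom : ∀ k, HasSum (fun j => a / 2 ^ (j + k)) (2 * a / 2 ^ k) := fun k => by
    have hterm : (fun j => a / 2 ^ (j + k)) = fun j => a / 2 ^ k * (1 / 2) ^ j := by
      funext j; rw [pow_add, one_div_pow]; field_simp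
    rw [hterm, show 2 * a / 2 ^ k = a / 2 ^ k * 2 by ring]
    exact hasSum_geometric_two.mul_left _
  have hsum : Summable g := (hgeom 0).summable.of_nonneg_of_le hg (by simpa using hdecay)
  have hhead : ∑ j ∈ range L, g j ≤ a * y ^ 2 * (2 ^ L - 1) := calc
    ∑ j ∈ range L, g j ≤ ∑ j ∈ range L, a * y ^ 2 * 2 ^ j :=
        sum_le_sum fun j _ => (hgrowth j).trans_eq (by ring)
    _ = a * y ^ 2 * (2 ^ L - 1) := by rw [← mul_sum, geom_sum_eq (by norm_num)]; norm_num
  have hmiddle : ∑ j ∈ Ico L K, g j ≤ (K - L : ℕ) * (a * d) := by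
    simpa using sum_le_card_nsmul (Ico L K) g _ fun j _ => hflat j
  have hbody : ∑ j ∈ range K, g j ≤ ∑ j ∈ range L, g j + ∑ j ∈ Ico L K, g j := by
    rcases le_total L K with hLK | hKL
    · rw [sum_range_add_sum_Ico _ hLK]
    · rw [Finset.Ico_eq_empty_of_le hKL, sum_empty, add_zero]
      exact sum_le_sum_of_subset_of_nonneg (range_subset_range.mpr hKL) fun j _ _ => hg j
  have htail : ∑' j, g (j + K) ≤ 2 * a / 2 ^ K :=
    hasSum_le (fun j => hdecay (j + K)) ((summable_nat_add_iff K).mpr hsum).hasSum (hgeom K)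
  rw [← hsum.sum_add_tsum_nat_add K]
  linarith

theorem norm_tsum_le_of_dyadic_bounds {F : Type*} [SeminormedAddCommGroup F] {b : ℕ → F}
    (hd : 0 < d) (hy : 0 < y) (hdecay : ∀ j, ‖b j‖ ≤ a / 2 ^ j) (hflat : ∀ j, ‖b j‖ ≤ a * d)
    (hgrowth : ∀ j, ‖b j‖ ≤ a * 2 ^ j * y ^ 2) :
    ‖∑' j, b j‖ ≤ 8 * a * (d * log (exp 1 + y / d)) := by
  have ha : 0 ≤ a := by simpa using (norm_nonneg _).trans (hdecay 0)
  have hℓ := one_le_log_exp_one_add (div_pos hy hd).le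
  obtain ⟨L, K, hL, hK, hKL⟩ := exists_dyadic_cutoffs hd hy
  have hsplit := tsum_le_of_dyadic_regimes (fun j => norm_nonneg (b j)) hgrowth hflat hdecay L K
  have hsum : Summable fun j => ‖b j‖ :=
    (summable_geometric_two.mul_left a).of_nonneg_of_le (fun j => norm_nonneg _)
      fun j => (hdecay j).trans_eq (by simp [div_eq_mul_inv])
  calc ‖∑' j, b j‖ ≤ ∑' j, ‖b j‖ := norm_tsum_le_tsum_norm hsum
    _ ≤ a * d + 5 * log (exp 1 + y / d) * (a * d) + 2 * a * d := by
      refine hsplit.trans (add_le_add_three ?_ ?_ ?_)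
      · rw [mul_assoc]; gcongr
      · gcongr
      · calc 2 * a / 2 ^ K = 2 * a * (1 / 2 ^ K) := by ring
          _ ≤ 2 * a * d := by gcongr
    _ ≤ 8 * a * (d * log (exp 1 + y / d)) := by nlinarith [mul_nonneg ha hd.le]

end DyadicSum

/-- Let `f ∈ Λ_*(ℝⁿ)` with Littlewood–Paley decomposition `f = Σ_j f_j`
satisfying `‖f_j‖_∞ ≤ A 2^{−j}`, `‖∇f_j‖_∞ ≤ A` and `‖∂^α f_j‖_∞ ≤ A 2^{j(|α|−1)}` for
`|α| ≤ 3`. Then for all `x, x'`, `y > 0`, and `p` with `‖p‖ = y`: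
`|f(x+p)−2f(x)+f(x−p) − f(x'+p)+2f(x')−f(x'−p)| ≤ C A |x−x'| log(e + y/|x−x'|)`. -/
theorem second_difference_variation_LP (n : ℕ) :
    ∃ C > 0, ∀ (f : EuclideanSpace ℝ (Fin n) → ℝ)
      (fj : ℕ → EuclideanSpace ℝ (Fin n) → ℝ) (A : ℝ),
      (∀ x, HasSum (fun j => fj j x) (f x)) →
      (∀ j, ContDiff ℝ 3 (fj j)) →
      (∀ j x, |fj j x| ≤ A * 2 ^ (-(j : ℝ))) →
      (∀ j x, ‖iteratedFDeriv ℝ 1 (fj j) x‖ ≤ A) →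
      (∀ (m : ℕ) (j : ℕ) (x), m ≤ 3 →
        ‖iteratedFDeriv ℝ m (fj j) x‖ ≤ A * 2 ^ ((j : ℝ) * ((m : ℝ) - 1))) →
      ∀ (x x' p : EuclideanSpace ℝ (Fin n)) (y : ℝ), 0 < y → ‖p‖ = y →
        |f (x + p) - 2 * f x + f (x - p) - f (x' + p) + 2 * f x' - f (x' - p)| ≤
          C * A * (‖x - x'‖ * Real.log (Real.exp 1 + y / ‖x - x'‖)) := by
  refine ⟨64, by norm_num, ?_⟩
  intro f fj A hsum hsmooth hsup hgrad hderiv x x' p y hy hp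
  rcases eq_or_ne x x' with rfl | hne
  · simp only [sub_self, norm_zero, zero_mul, mul_zero, abs_nonpos_iff]; ring
  have hd : 0 < ‖x - x'‖ := norm_pos_iff.mpr (sub_ne_zero.mpr hne)
  have hA : 0 ≤ A := by simpa using (abs_nonneg _).trans (hsup 0 x)
  have hsup' : ∀ j z, ‖fj j z‖ ≤ A / 2 ^ j := fun j z => by
    simpa [rpow_neg, div_eq_mul_inv] using hsup j z
  have hlip : ∀ j a b, ‖fj j a - fj j b‖ ≤ A * ‖a - b‖ := fun j =>
    norm_sub_le_of_norm_fderiv_le ((hsmooth j).differentiable (by norm_num))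
      fun z => by simpa using hgrad j z
  have hhess : ∀ j z, ‖iteratedFDeriv ℝ 2 (fj j) z‖ ≤ A * 2 ^ j := fun j z => by
    simpa [show (2 : ℝ) - 1 = 1 by norm_num] using hderiv 2 j z (by norm_num)
  have hLHS : f (x + p) - 2 * f x + f (x - p) - f (x' + p) + 2 * f x' - f (x' - p) =
      secondDiff f x p - secondDiff f x' p := by
    simp only [secondDiff]; ring
  rw [hLHS, ← ((HasSum.secondDiff hsum x p).sub (HasSum.secondDiff hsum x' p)).tsum_eq,
    ← Real.norm_eq_abs]
  refine (norm_tsum_le_of_dyadic_bounds (a := 8 * A) hd hy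
    (fun j => ?_) (fun j => ?_) (fun j => ?_)).trans_eq (by ring)
  · exact (norm_sub_le_of_le (norm_secondDiff_le (hsup' j) x p)
      (norm_secondDiff_le (hsup' j) x' p)).trans_eq (by ring)
  · exact (norm_secondDiff_sub_secondDiff_le (hlip j) x x' p).trans
      (by nlinarith [mul_nonneg hA (norm_nonneg (x - x'))])
  · have hC2 : ContDiff ℝ 2 (fj j) := (hsmooth j).of_le (by norm_num)
    have := norm_sub_le_of_le
      (norm_secondDiff_le_of_norm_iteratedFDeriv_two_le hC2 (hhess j) x p)
      (norm_secondDiff_le_of_norm_iteratedFDeriv_two_le hC2 (hhess j) x' p)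
    rw [hp] at this
    nlinarith [mul_nonneg (mul_nonneg hA (pow_nonneg zero_le_two j)) (sq_nonneg y)]
end
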